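/- arXiv:1311.4012 — 6 statements merged into one kernel-verified Lean document; each statement's English description precedes it below -/
import Mathlib

section
/- Let f, g : (a,b) → ℝ≥0 be C² functions with b > a such that: the limits as x → b⁻ of f, g, and their unit tangent vectors exist; f' ≥ 0 and g' ≥ 0 on (a,b); lim_{x→b⁻} f(x) ≤ lim_{x→b⁻} g(x); the limiting tangent angle of f at b is at least that of g; and the upward curvature κ_f(x) = f''(x)/(1+f'(x)²)^{3/2} satisfies κ_f(x) ≤ κ_g(x) for all x ∈ (a,b). Then f(x) ≤ g(x) and θ(t_f(x)) ≥ θ(t_g(x)) for all x ∈ (a,b), where θ(t_h(x)) = arctan(h'(x)) is the angle of the unit tangent vector. -/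
open Set Filter Topology

/-!
The curvature of the graph of `h` is the derivative of `sin (arctan h')`, the vertical
component of its unit tangent. So `κ_f ≤ κ_g` makes `sin (arctan g') - sin (arctan f')`
nondecreasing on `(a, b)`; its limit at `b⁻` is `sin T_g - sin T_f ≤ 0`, whence `g' ≤ f'`
and the angle inequality. Then `f - g` is nondecreasing with limit `L_f - L_g ≤ 0` at `b⁻`.
-/

namespace Real

theorem hasDerivAt_sin_arctan_comp {h : ℝ → ℝ} {h' x : ℝ} (hh : HasDerivAt h h' x) :
    HasDerivAt (fun y => sin (arctan (h y))) (h' / (1 + h x ^ 2) ^ ((3 : ℝ) / 2)) x := by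
  refine ((hasDerivAt_sin _).comp x ((hasDerivAt_arctan _).comp x hh)).congr_deriv ?_
  have hpos : 0 < 1 + h x ^ 2 := by positivity
  have hsqrt : √(1 + h x ^ 2) ≠ 0 := by positivity
  rw [Function.comp_apply, cos_arctan, show (3 : ℝ) / 2 = 1 + 1 / 2 by norm_num,
    rpow_add hpos, rpow_one, ← sqrt_eq_rpow]
  field_simp

theorem sin_le_sin_of_tendsto_arctan {l : Filter ℝ} [l.NeBot] {u v : ℝ → ℝ} {S T : ℝ}
    (hu : Tendsto (fun x => arctan (u x)) l (𝓝 S))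
    (hv : Tendsto (fun x => arctan (v x)) l (𝓝 T)) (hST : S ≤ T) : sin S ≤ sin T :=
  sin_le_sin_of_le_of_le_pi_div_two
    (ge_of_tendsto hu (Eventually.of_forall fun _ => (neg_pi_div_two_lt_arctan _).le))
    (le_of_tendsto hv (Eventually.of_forall fun _ => (arctan_lt_pi_div_two _).le)) hST

end Real

theorem le_of_tendsto_nhdsLT_of_hasDerivAt_nonneg {a b L : ℝ} {u u' : ℝ → ℝ}
    (hu : ∀ x ∈ Ioo a b, HasDerivAt u (u' x) x) (hu' : ∀ x ∈ Ioo a b, 0 ≤ u' x)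
    (hL : Tendsto u (𝓝[<] b) (𝓝 L)) {x : ℝ} (hx : x ∈ Ioo a b) : u x ≤ L := by
  have hmono : MonotoneOn u (Ioo a b) := by
    refine monotoneOn_of_hasDerivWithinAt_nonneg (f' := u') (convex_Ioo a b)
      (fun y hy => (hu y hy).continuousAt.continuousWithinAt) (fun y hy => ?_) (fun y hy => ?_)
    · rw [interior_Ioo] at hy ⊢
      exact (hu y hy).hasDerivWithinAt
    · rw [interior_Ioo] at hy
      exact hu' y hy
  refine ge_of_tendsto hL ?_
  filter_upwards [Ioo_mem_nhdsLT hx.2] with y hy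
  exact hmono hx ⟨hx.1.trans hy.1, hy.2⟩ hy.1.le

theorem curvature_comparison_general
    (a b : ℝ)
    (f g f' g' f'' g'' : ℝ → ℝ)
    (hfd : ∀ x ∈ Ioo a b, HasDerivAt f (f' x) x)
    (hfd' : ∀ x ∈ Ioo a b, HasDerivAt f' (f'' x) x)
    (hgd : ∀ x ∈ Ioo a b, HasDerivAt g (g' x) x)
    (hgd' : ∀ x ∈ Ioo a b, HasDerivAt g' (g'' x) x)
    (Lf Lg Tf Tg : ℝ)
    (hLf : Tendsto f (𝓝[<] b) (𝓝 Lf))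
    (hLg : Tendsto g (𝓝[<] b) (𝓝 Lg))
    (hTf : Tendsto (fun x => Real.arctan (f' x)) (𝓝[<] b) (𝓝 Tf))
    (hTg : Tendsto (fun x => Real.arctan (g' x)) (𝓝[<] b) (𝓝 Tg))
    (hL : Lf ≤ Lg)
    (hT : Tg ≤ Tf)
    (hκ : ∀ x ∈ Ioo a b,
      f'' x / (1 + (f' x) ^ 2) ^ ((3 : ℝ) / 2) ≤ g'' x / (1 + (g' x) ^ 2) ^ ((3 : ℝ) / 2)) :
    ∀ x ∈ Ioo a b, f x ≤ g x ∧ Real.arctan (g' x) ≤ Real.arctan (f' x) := by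
  have hslope : ∀ x ∈ Ioo a b, g' x ≤ f' x := fun x hx => by
    have hsin := le_of_tendsto_nhdsLT_of_hasDerivAt_nonneg
      (u := fun y => Real.sin (Real.arctan (g' y)) - Real.sin (Real.arctan (f' y)))
      (fun y hy => (Real.hasDerivAt_sin_arctan_comp (hgd' y hy)).sub
        (Real.hasDerivAt_sin_arctan_comp (hfd' y hy)))
      (fun y hy => sub_nonneg.2 (hκ y hy))
      (((Real.continuous_sin.tendsto Tg).comp hTg).sub ((Real.continuous_sin.tendsto Tf).comp hTf))
      hx
    have hsinT := Real.sin_le_sin_of_tendsto_arctan hTg hTf hT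
    exact Real.sin_arctan_strictMono.le_iff_le.1 (by linarith)
  intro x hx
  refine ⟨?_, Real.arctan_strictMono.monotone (hslope x hx)⟩
  have hdiff := le_of_tendsto_nhdsLT_of_hasDerivAt_nonneg (u := fun y => f y - g y)
    (fun y hy => (hfd y hy).sub (hgd y hy)) (fun y hy => sub_nonneg.2 (hslope y hy))
    (hLf.sub hLg) hx
  linarith

/-- Curvature Comparison Theorem (Proposition: first part). -/
theorem curvature_comparison
    (a b : ℝ) (hab : a < b)
    (f g f' g' f'' g'' : ℝ → ℝ)
    (hfd : ∀ x ∈ Ioo a b, HasDerivAt f (f' x) x)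
    (hfd' : ∀ x ∈ Ioo a b, HasDerivAt f' (f'' x) x)
    (hgd : ∀ x ∈ Ioo a b, HasDerivAt g (g' x) x)
    (hgd' : ∀ x ∈ Ioo a b, HasDerivAt g' (g'' x) x)
    (hf0 : ∀ x ∈ Ioo a b, 0 ≤ f x)
    (hg0 : ∀ x ∈ Ioo a b, 0 ≤ g x)
    (hf'0 : ∀ x ∈ Ioo a b, 0 ≤ f' x)
    (hg'0 : ∀ x ∈ Ioo a b, 0 ≤ g' x)
    (Lf Lg Tf Tg : ℝ)
    (hLf : Tendsto f (𝓝[<] b) (𝓝 Lf))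
    (hLg : Tendsto g (𝓝[<] b) (𝓝 Lg))
    (hTf : Tendsto (fun x => Real.arctan (f' x)) (𝓝[<] b) (𝓝 Tf))
    (hTg : Tendsto (fun x => Real.arctan (g' x)) (𝓝[<] b) (𝓝 Tg))
    (hL : Lf ≤ Lg)
    (hT : Tg ≤ Tf)
    (hκ : ∀ x ∈ Ioo a b,
      f'' x / (1 + (f' x) ^ 2) ^ ((3 : ℝ) / 2) ≤ g'' x / (1 + (g' x) ^ 2) ^ ((3 : ℝ) / 2)) :
    ∀ x ∈ Ioo a b, f x ≤ g x ∧ Real.arctan (g' x) ≤ Real.arctan (f' x) :=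
  curvature_comparison_general a b f g f' g' f'' g'' hfd hfd' hgd hgd' Lf Lg Tf Tg hLf hLg hTf hTg
    hL hT hκ
end

section
/- Under the hypotheses of the Curvature Comparison Theorem (f, g : (a,b) → ℝ≥0 C², nonnegative derivatives, limits at b⁻ exist, lim f ≤ lim g at b, limiting tangent angle of f at least that of g, and κ_f ≤ κ_g on (a,b)), if additionally there exists y ∈ (a,b) with κ_f(y) < κ_g(y), then there exists φ > 0 such that θ(t_f(x)) − θ(t_g(x)) ≥ φ for all x ∈ (a,y). -/
/-!
Since `d/dx sin (arctan h'(x)) = κ_h(x)`, the function `S = sin θ_f - sin θ_g` has derivative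
`κ_f - κ_g ≤ 0`, so it is antitone on `(a, b)`. Its limit at `b⁻` is `sin T_f - sin T_g ≥ 0`, and
the strict inequality `κ_f(y) < κ_g(y)` makes `S` drop strictly just after `y`, so `S(y) > 0`.
Hence `S(x) ≥ S(y) > 0` on `(a, y)`, and as `sin` is `1`-Lipschitz and increasing on
`[-π/2, π/2]`, `θ_f - θ_g ≥ S ≥ S(y)` there.
-/

open Set Filter Topology Real

theorem HasDerivAt.sin_arctan {F : ℝ → ℝ} {c x : ℝ} (h : HasDerivAt F c x) :
    HasDerivAt (fun t => Real.sin (Real.arctan (F t))) (c / (1 + F x ^ 2) ^ ((3 : ℝ) / 2)) x := by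
  have hcomp : HasDerivAt (fun t => Real.sin (Real.arctan (F t)))
      (Real.cos (Real.arctan (F x)) * (1 / (1 + F x ^ 2) * c)) x :=
    (Real.hasDerivAt_sin _).comp x ((Real.hasDerivAt_arctan (F x)).comp x h)
  convert hcomp using 1
  have hpos : (0 : ℝ) < 1 + F x ^ 2 := by positivity
  have hsq : √(1 + F x ^ 2) ^ 2 = 1 + F x ^ 2 := sq_sqrt hpos.le
  have hsqrt_pos : 0 < √(1 + F x ^ 2) := sqrt_pos.2 hpos
  rw [cos_arctan, show (3 : ℝ) / 2 = 1 / 2 + 1 by norm_num, rpow_add hpos, rpow_one,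
    ← sqrt_eq_rpow]
  field_simp

theorem mem_Icc_of_tendsto_arctan {α : Type*} {l : Filter α} [l.NeBot] {F : α → ℝ} {T : ℝ}
    (h : Tendsto (fun x => arctan (F x)) l (𝓝 T)) : T ∈ Icc (-(π / 2)) (π / 2) :=
  isClosed_Icc.mem_of_tendsto h (Eventually.of_forall fun _ => mem_Icc_of_Ioo (arctan_mem_Ioo _))

theorem sin_arctan_sub_le_arctan_sub {p q : ℝ} (h : sin (arctan q) ≤ sin (arctan p)) :
    sin (arctan p) - sin (arctan q) ≤ arctan p - arctan q := by
  have hqp : arctan q ≤ arctan p := (strictMonoOn_sin.le_iff_le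
    (mem_Icc_of_Ioo (arctan_mem_Ioo q)) (mem_Icc_of_Ioo (arctan_mem_Ioo p))).1 h
  calc sin (arctan p) - sin (arctan q) ≤ |sin (arctan p) - sin (arctan q)| := le_abs_self _
    _ ≤ |arctan p - arctan q| := abs_sin_sub_sin_le _ _
    _ = arctan p - arctan q := abs_of_nonneg (sub_nonneg.2 hqp)

theorem HasDerivAt.exists_lt_of_neg {S : ℝ → ℝ} {d y b : ℝ} (hd : HasDerivAt S d y)
    (hneg : d < 0) (hyb : y < b) : ∃ z ∈ Ioo y b, S z < S y := by
  have hslope : ∀ᶠ z in 𝓝[>] y, slope S y z < 0 :=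
    hd.hasDerivWithinAt.limsup_slope_le' (lt_irrefl y) hneg
  obtain ⟨z, hz, hzyb⟩ := (hslope.and (Ioo_mem_nhdsGT hyb)).exists
  exact ⟨z, hzyb, (slope_neg_iff_of_le hzyb.1.le).1 hz⟩

theorem AntitoneOn.le_of_tendsto_nhdsLT {S : ℝ → ℝ} {a b w L : ℝ} (hS : AntitoneOn S (Ioo a b))
    (hL : Tendsto S (𝓝[<] b) (𝓝 L)) (hw : w ∈ Ioo a b) : L ≤ S w :=
  le_of_tendsto hL <| by
    filter_upwards [Ioo_mem_nhdsLT hw.2] with x hx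
    exact hS hw ⟨hw.1.trans hx.1, hx.2⟩ hx.1.le

theorem AntitoneOn.lt_of_tendsto_nhdsLT_of_hasDerivAt_neg {S : ℝ → ℝ} {a b y d L : ℝ}
    (hS : AntitoneOn S (Ioo a b)) (hL : Tendsto S (𝓝[<] b) (𝓝 L)) (hy : y ∈ Ioo a b)
    (hd : HasDerivAt S d y) (hneg : d < 0) : L < S y := by
  obtain ⟨z, hz, hSz⟩ := hd.exists_lt_of_neg hneg hy.2
  exact (hS.le_of_tendsto_nhdsLT hL ⟨hy.1.trans hz.1, hz.2⟩).trans_lt hSz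

theorem curvature_comparison_strict_general
    (a b : ℝ)
    (f' g' f'' g'' : ℝ → ℝ)
    (hfd' : ∀ x ∈ Ioo a b, HasDerivAt f' (f'' x) x)
    (hgd' : ∀ x ∈ Ioo a b, HasDerivAt g' (g'' x) x)
    (Tf Tg : ℝ)
    (hTf : Tendsto (fun x => Real.arctan (f' x)) (𝓝[<] b) (𝓝 Tf))
    (hTg : Tendsto (fun x => Real.arctan (g' x)) (𝓝[<] b) (𝓝 Tg))
    (hT : Tg ≤ Tf)
    (hκ : ∀ x ∈ Ioo a b,
      f'' x / (1 + (f' x) ^ 2) ^ ((3 : ℝ) / 2) ≤ g'' x / (1 + (g' x) ^ 2) ^ ((3 : ℝ) / 2)) :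
    ∀ y ∈ Ioo a b,
      f'' y / (1 + (f' y) ^ 2) ^ ((3 : ℝ) / 2) < g'' y / (1 + (g' y) ^ 2) ^ ((3 : ℝ) / 2) →
      ∃ φ > 0, ∀ x ∈ Ioo a y,
        φ ≤ Real.arctan (f' x) - Real.arctan (g' x) := by
  intro y hy hκy
  set S : ℝ → ℝ := fun x => sin (arctan (f' x)) - sin (arctan (g' x))
  set dS : ℝ → ℝ := fun x =>
    f'' x / (1 + f' x ^ 2) ^ ((3 : ℝ) / 2) - g'' x / (1 + g' x ^ 2) ^ ((3 : ℝ) / 2)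
  have hS : ∀ x ∈ Ioo a b, HasDerivAt S (dS x) x :=
    fun x hx => (hfd' x hx).sin_arctan.sub (hgd' x hx).sin_arctan
  have hanti : AntitoneOn S (Ioo a b) := by
    refine antitoneOn_of_hasDerivWithinAt_nonpos (f' := dS) (convex_Ioo a b)
      (fun x hx => (hS x hx).continuousAt.continuousWithinAt) ?_ ?_ <;> rw [interior_Ioo]
    · exact fun x hx => (hS x hx).hasDerivWithinAt
    · exact fun x hx => sub_nonpos.2 (hκ x hx)
  have hlim : Tendsto S (𝓝[<] b) (𝓝 (sin Tf - sin Tg)) :=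
    ((continuous_sin.tendsto Tf).comp hTf).sub ((continuous_sin.tendsto Tg).comp hTg)
  have hlim_nonneg : 0 ≤ sin Tf - sin Tg := sub_nonneg.2 <| strictMonoOn_sin.monotoneOn
    (mem_Icc_of_tendsto_arctan hTg) (mem_Icc_of_tendsto_arctan hTf) hT
  have hSy : 0 < S y := hlim_nonneg.trans_lt
    (hanti.lt_of_tendsto_nhdsLT_of_hasDerivAt_neg hlim hy (hS y hy) (sub_neg.2 hκy))
  refine ⟨S y, hSy, fun x hx => ?_⟩
  have hSx : S y ≤ S x := hanti ⟨hx.1, hx.2.trans hy.2⟩ hy hx.2.le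
  exact hSx.trans (sin_arctan_sub_le_arctan_sub (sub_nonneg.1 (hSy.le.trans hSx)))

/-- Curvature Comparison Theorem (Proposition: first part). -/
theorem curvature_comparison_strict
    (a b : ℝ) (hab : a < b)
    (f g f' g' f'' g'' : ℝ → ℝ)
    (hfd : ∀ x ∈ Ioo a b, HasDerivAt f (f' x) x)
    (hfd' : ∀ x ∈ Ioo a b, HasDerivAt f' (f'' x) x)
    (hgd : ∀ x ∈ Ioo a b, HasDerivAt g (g' x) x)
    (hgd' : ∀ x ∈ Ioo a b, HasDerivAt g' (g'' x) x)
    (hf0 : ∀ x ∈ Ioo a b, 0 ≤ f x)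
    (hg0 : ∀ x ∈ Ioo a b, 0 ≤ g x)
    (hf'0 : ∀ x ∈ Ioo a b, 0 ≤ f' x)
    (hg'0 : ∀ x ∈ Ioo a b, 0 ≤ g' x)
    (Lf Lg Tf Tg : ℝ)
    (hLf : Tendsto f (𝓝[<] b) (𝓝 Lf))
    (hLg : Tendsto g (𝓝[<] b) (𝓝 Lg))
    (hTf : Tendsto (fun x => Real.arctan (f' x)) (𝓝[<] b) (𝓝 Tf))
    (hTg : Tendsto (fun x => Real.arctan (g' x)) (𝓝[<] b) (𝓝 Tg))
    (hL : Lf ≤ Lg)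
    (hT : Tg ≤ Tf)
    (hκ : ∀ x ∈ Ioo a b,
      f'' x / (1 + (f' x) ^ 2) ^ ((3 : ℝ) / 2) ≤ g'' x / (1 + (g' x) ^ 2) ^ ((3 : ℝ) / 2)) :
    ∀ y ∈ Ioo a b,
      f'' y / (1 + (f' y) ^ 2) ^ ((3 : ℝ) / 2) < g'' y / (1 + (g' y) ^ 2) ^ ((3 : ℝ) / 2) →
      ∃ φ > 0, ∀ x ∈ Ioo a y,
        φ ≤ Real.arctan (f' x) - Real.arctan (g' x) :=
  curvature_comparison_strict_general a b f' g' f'' g'' hfd' hgd' Tf Tg hTf hTg hT hκ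
end

section
/- Let α(x) = (a + r cos(x/r), b + r sin(x/r)) with r > 0, a, b ≥ 0, let g : ℝ → ℝ be C³, convex, with g' ≥ 0, and define H₁(x) = g'(|α(x)|)·(N(x)·n(x)) where N(x) = α(x)/|α(x)| and n(x) = (cos(x/r), sin(x/r)). If x ∈ [0, πr/2] and a sin(x/r) ≥ b cos(x/r), then H₁'(x) ≤ 0. -/
open Set Real

/-!
Write `p(t) = a cos(t/r) + b sin(t/r)` for the component of the centre `(a, b)` along the
normal `n(t)`. Then `|α|² = a² + b² + r² + 2 r p` and `α · n = r + p`, so `H₁ = Φ ∘ p` with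
`Φ(y) = g'(ρ) (r + y) / ρ`, `ρ = √(a² + b² + r² + 2 r y)`. On the quarter circle `p ≥ 0`, and for
`y ≥ 0` both factors of `Φ` are nonnegative and nondecreasing, so `Φ' ≥ 0`; meanwhile
`p' = (b cos(x/r) - a sin(x/r)) / r ≤ 0`.
-/

/-- `Φ` above, with `d2 = a² + b²` and `φ = g'`. -/
noncomputable def circleNormalFactor (φ : ℝ → ℝ) (d2 r y : ℝ) : ℝ :=
  φ (√(d2 + r ^ 2 + 2 * r * y)) * ((r + y) / √(d2 + r ^ 2 + 2 * r * y))

lemma exists_hasDerivAt_circleNormalFactor_nonneg {φ : ℝ → ℝ} (hφd : Differentiable ℝ φ)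
    (hφm : Monotone φ) (hφ : ∀ t, 0 ≤ φ t) {d2 r y : ℝ} (hd2 : 0 ≤ d2) (hr : 0 < r)
    (hy : 0 ≤ y) : ∃ D, HasDerivAt (circleNormalFactor φ d2 r) D y ∧ 0 ≤ D := by
  set ρ := √(d2 + r ^ 2 + 2 * r * y) with hρdef
  have hQ : 0 < d2 + r ^ 2 + 2 * r * y := by positivity
  have hρsq : ρ ^ 2 = d2 + r ^ 2 + 2 * r * y := sq_sqrt hQ.le
  have hρ : 0 < ρ := sqrt_pos.mpr hQ
  have hρ' : HasDerivAt (fun y ↦ √(d2 + r ^ 2 + 2 * r * y)) (r / ρ) y := by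
    refine ((((hasDerivAt_id' y).const_mul (2 * r)).const_add _).sqrt hQ.ne').congr_deriv ?_
    rw [mul_one, mul_div_mul_left _ _ two_ne_zero]
  have hΦ := ((hφd ρ).hasDerivAt.comp y hρ').mul
    (((hasDerivAt_id' y).const_add r).div hρ' hρ.ne')
  simp only [Function.comp_apply, Pi.div_apply, ← hρdef] at hΦ
  have hφ' : 0 ≤ deriv φ ρ := hφm.deriv_nonneg
  have hφρ := hφ ρ
  -- `ρ² - r (r + y) = d2 + r y ≥ 0` makes the factor `(r + y) / ρ` nondecreasing in `y`.
  refine ⟨deriv φ ρ * (r / ρ) * ((r + y) / ρ) + φ ρ * ((d2 + r * y) / ρ ^ 3),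
    hΦ.congr_deriv ?_, by positivity⟩
  field_simp
  linear_combination φ ρ * hρsq

lemma circle_normSq_eq (a b r θ : ℝ) :
    (a + r * cos θ) ^ 2 + (b + r * sin θ) ^ 2
      = a ^ 2 + b ^ 2 + r ^ 2 + 2 * r * (a * cos θ + b * sin θ) := by
  linear_combination r ^ 2 * sin_sq_add_cos_sq θ

lemma circle_inner_normal_eq (a b r θ : ℝ) :
    (a + r * cos θ) * cos θ + (b + r * sin θ) * sin θ = r + (a * cos θ + b * sin θ) := by
  linear_combination r * sin_sq_add_cos_sq θ

lemma hasDerivAt_centre_inner_normal (a b r x : ℝ) :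
    HasDerivAt (fun t ↦ a * cos (t / r) + b * sin (t / r))
      ((b * cos (x / r) - a * sin (x / r)) / r) x := by
  have hθ := (hasDerivAt_id' x).div_const r
  exact ((hθ.cos.const_mul a).add (hθ.sin.const_mul b)).congr_deriv (by ring)

lemma centre_inner_normal_nonneg {a b θ : ℝ} (ha : 0 ≤ a) (hb : 0 ≤ b) (hθ : θ ∈ Icc 0 (π / 2)) :
    0 ≤ a * cos θ + b * sin θ := by
  have hcos := cos_nonneg_of_mem_Icc ⟨by linarith [pi_pos, hθ.1], hθ.2⟩
  have hsin := sin_nonneg_of_nonneg_of_le_pi hθ.1 (by linarith [pi_pos, hθ.2])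
  positivity

theorem H1_deriv_nonpos_general
    (a b r : ℝ) (hr : 0 < r) (ha : 0 ≤ a) (hb : 0 ≤ b)
    (g : ℝ → ℝ) (hg : ContDiff ℝ 3 g) (hgconv : ConvexOn ℝ univ g)
    (hg' : ∀ t, 0 ≤ deriv g t)
    (H₁ : ℝ → ℝ)
    (hH₁ : H₁ = fun t =>
      deriv g (Real.sqrt ((a + r * Real.cos (t / r)) ^ 2 + (b + r * Real.sin (t / r)) ^ 2))
        * (((a + r * Real.cos (t / r)) * Real.cos (t / r)
            + (b + r * Real.sin (t / r)) * Real.sin (t / r))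
          / Real.sqrt ((a + r * Real.cos (t / r)) ^ 2 + (b + r * Real.sin (t / r)) ^ 2)))
    (x : ℝ) (hx : x ∈ Icc 0 (π * r / 2))
    (hab : b * Real.cos (x / r) ≤ a * Real.sin (x / r)) :
    deriv H₁ x ≤ 0 := by
  have hH₁_comp : H₁ = circleNormalFactor (deriv g) (a ^ 2 + b ^ 2) r ∘
      fun t ↦ a * cos (t / r) + b * sin (t / r) := by
    rw [hH₁]
    funext t
    simp only [Function.comp_apply, circleNormalFactor, circle_normSq_eq, circle_inner_normal_eq]
  have hθ : x / r ∈ Icc 0 (π / 2) :=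
    ⟨div_nonneg hx.1 hr.le, (div_le_iff₀ hr).mpr (by linarith [hx.2])⟩
  have hmono : Monotone (deriv g) :=
    monotoneOn_univ.mp (hgconv.monotoneOn_deriv fun t _ ↦ hg.differentiable (by norm_num) t)
  obtain ⟨D, hD, hD_nonneg⟩ := exists_hasDerivAt_circleNormalFactor_nonneg
    (hg.of_le (by norm_num)).differentiable_deriv_two hmono hg' (d2 := a ^ 2 + b ^ 2)
    (by positivity) hr (centre_inner_normal_nonneg ha hb hθ)
  rw [hH₁_comp, (hD.comp x (hasDerivAt_centre_inner_normal a b r x)).deriv]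
  exact mul_nonpos_of_nonneg_of_nonpos hD_nonneg
    (div_nonpos_of_nonpos_of_nonneg (by linarith) hr.le)

/-- `H₁' ≤ 0` along the circle `α(x) = (a + r cos(x/r), b + r sin(x/r))` when
    `a sin(x/r) ≥ b cos(x/r)`, for a convex nondecreasing radial log-density `g`. -/
theorem H1_deriv_nonpos
    (a b r : ℝ) (hr : 0 < r) (ha : 0 ≤ a) (hb : 0 ≤ b)
    (g : ℝ → ℝ) (hg : ContDiff ℝ 3 g) (hgconv : ConvexOn ℝ univ g)
    (hg' : ∀ t, 0 ≤ deriv g t)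
    (H₁ : ℝ → ℝ)
    (hH₁ : H₁ = fun t =>
      deriv g (Real.sqrt ((a + r * Real.cos (t / r)) ^ 2 + (b + r * Real.sin (t / r)) ^ 2))
        * (((a + r * Real.cos (t / r)) * Real.cos (t / r)
            + (b + r * Real.sin (t / r)) * Real.sin (t / r))
          / Real.sqrt ((a + r * Real.cos (t / r)) ^ 2 + (b + r * Real.sin (t / r)) ^ 2)))
    (x : ℝ) (hx : x ∈ Icc 0 (π * r / 2))
    (hα : (a + r * Real.cos (x / r), b + r * Real.sin (x / r)) ≠ ((0 : ℝ), (0 : ℝ)))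
    (hab : b * Real.cos (x / r) ≤ a * Real.sin (x / r)) :
    deriv H₁ x ≤ 0 :=
  H1_deriv_nonpos_general a b r hr ha hb g hg hgconv hg' H₁ hH₁ x hx hab
end

section
/- Let α(x) = (a + r cos(x/r), b + r sin(x/r)) with r > 0, a, b ≥ 0, let g : ℝ → ℝ be C³, convex, with g' ≥ 0, and define H₁(x) = g'(|α(x)|)·(N(x)·n(x)) as above. If x ∈ [0, πr/2], a sin(x/r) > b cos(x/r), and g'(|α(x)|) > 0, then H₁'(x) < 0. -/
open Set Real

/-!
With `θ = x / r`, `D = b cos θ - a sin θ` and `N = α · n`, both `|α|²` and `N` have derivatives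
proportional to `D` (namely `2 D` and `D / r`), so the product and chain rules factor as
`H₁' = (D / |α|) (g''(|α|) N / |α| + g'(|α|) (|α|² - r N) / (r |α|²))`.
Here `D < 0` by hypothesis, `g'' ≥ 0` by convexity, `N ≥ 0` on the quarter circle and
`|α|² - r N = a (a + r cos θ) + b (b + r sin θ) > 0`.
-/

section Circle

variable (a b : ℝ) {r : ℝ}

theorem hasDerivAt_circle_normSq (hr : r ≠ 0) (x : ℝ) :
    HasDerivAt (fun t => (a + r * cos (t / r)) ^ 2 + (b + r * sin (t / r)) ^ 2)
      (2 * (b * cos (x / r) - a * sin (x / r))) x := by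
  have hθ : HasDerivAt (fun t => t / r) (1 / r) x := (hasDerivAt_id x).div_const r
  refine ((((hθ.cos.const_mul r).const_add a).pow 2).add
    (((hθ.sin.const_mul r).const_add b).pow 2)).congr_deriv ?_
  field_simp
  ring

theorem hasDerivAt_circle_inner_normal (x : ℝ) :
    HasDerivAt (fun t => (a + r * cos (t / r)) * cos (t / r) + (b + r * sin (t / r)) * sin (t / r))
      ((b * cos (x / r) - a * sin (x / r)) / r) x := by
  have hθ : HasDerivAt (fun t => t / r) (1 / r) x := (hasDerivAt_id x).div_const r
  have hfun : (fun t => (a + r * cos (t / r)) * cos (t / r) + (b + r * sin (t / r)) * sin (t / r))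
      = fun t => r + (a * cos (t / r) + b * sin (t / r)) := by
    funext t
    linear_combination r * sin_sq_add_cos_sq (t / r)
  rw [hfun]
  refine (((hθ.cos.const_mul a).add (hθ.sin.const_mul b)).const_add r).congr_deriv ?_
  ring

end Circle

theorem hasDerivAt_comp_sqrt_mul_div_sqrt {f P N : ℝ → ℝ} {f' D r x : ℝ} (hr : r ≠ 0)
    (hP : HasDerivAt P (2 * D) x) (hN : HasDerivAt N (D / r) x) (hPx : 0 < P x)
    (hf : HasDerivAt f f' √(P x)) :
    HasDerivAt (fun t => f √(P t) * (N t / √(P t)))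
      (D / √(P x) * (f' * N x / √(P x) + f √(P x) * (P x - r * N x) / (r * P x))) x := by
  have hp : 0 < √(P x) := sqrt_pos.mpr hPx
  have hsqrt := (hasDerivAt_sqrt hPx.ne').comp x hP
  refine ((hf.comp x hsqrt).mul (hN.div hsqrt hp.ne')).congr_deriv ?_
  have hp2 : √(P x) ^ 2 = P x := sq_sqrt hPx.le
  simp only [Function.comp_def, Pi.div_apply]
  field_simp
  linear_combination D * f √(P x) * N x * r * hp2

theorem H1_deriv_neg_general
    (a b r : ℝ) (hr : 0 < r) (hb : 0 ≤ b)
    (g : ℝ → ℝ) (hg : ContDiff ℝ 3 g) (hgconv : ConvexOn ℝ univ g)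
    (H₁ : ℝ → ℝ)
    (hH₁ : H₁ = fun t =>
      deriv g (Real.sqrt ((a + r * Real.cos (t / r)) ^ 2 + (b + r * Real.sin (t / r)) ^ 2))
        * (((a + r * Real.cos (t / r)) * Real.cos (t / r)
            + (b + r * Real.sin (t / r)) * Real.sin (t / r))
          / Real.sqrt ((a + r * Real.cos (t / r)) ^ 2 + (b + r * Real.sin (t / r)) ^ 2)))
    (x : ℝ) (hx : x ∈ Icc 0 (π * r / 2))
    (hab : b * Real.cos (x / r) < a * Real.sin (x / r))
    (hgx : 0 < deriv g
      (Real.sqrt ((a + r * Real.cos (x / r)) ^ 2 + (b + r * Real.sin (x / r)) ^ 2))) :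
    deriv H₁ x < 0 := by
  have hθ0 : 0 ≤ x / r := div_nonneg hx.1 hr.le
  have hθ1 : x / r ≤ π / 2 := by rw [div_le_iff₀ hr]; linarith [hx.2]
  have hc : 0 ≤ cos (x / r) := cos_nonneg_of_mem_Icc ⟨by linarith [pi_pos], hθ1⟩
  have hs : 0 ≤ sin (x / r) := sin_nonneg_of_nonneg_of_le_pi hθ0 (by linarith [pi_pos])
  have ha : 0 < a := by nlinarith [mul_nonneg hb hc]
  set P := (a + r * cos (x / r)) ^ 2 + (b + r * sin (x / r)) ^ 2
  set N := (a + r * cos (x / r)) * cos (x / r) + (b + r * sin (x / r)) * sin (x / r)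
  have hP : 0 < P := by positivity
  have hN : 0 ≤ N := by positivity
  have hPN : 0 < P - r * N := by
    have hαa : 0 < a + r * cos (x / r) := by positivity
    nlinarith [sin_sq_add_cos_sq (x / r), mul_nonneg hb (by positivity : 0 ≤ b + r * sin (x / r))]
  have hg2 : 0 ≤ deriv (deriv g) √P :=
    (monotoneOn_univ.mp (hgconv.monotoneOn_deriv fun y _ =>
      hg.differentiable (by norm_num) y)).deriv_nonneg
  have hgd : HasDerivAt (deriv g) (deriv (deriv g) √P) √P :=
    ((hg.deriv' (n := 2)).differentiable (by norm_num) _).hasDerivAt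
  rw [hH₁, (hasDerivAt_comp_sqrt_mul_div_sqrt hr.ne' (hasDerivAt_circle_normSq a b hr.ne' x)
    (hasDerivAt_circle_inner_normal a b x) hP hgd).deriv]
  refine mul_neg_of_neg_of_pos (div_neg_of_neg_of_pos (by linarith) (sqrt_pos.mpr hP)) ?_
  exact add_pos_of_nonneg_of_pos (by positivity) (by positivity)

/-- `H₁' ≤ 0` along the circle `α(x) = (a + r cos(x/r), b + r sin(x/r))` when (strict version)
    `a sin(x/r) ≥ b cos(x/r)`, for a convex nondecreasing radial log-density `g`. -/
theorem H1_deriv_neg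
    (a b r : ℝ) (hr : 0 < r) (ha : 0 ≤ a) (hb : 0 ≤ b)
    (g : ℝ → ℝ) (hg : ContDiff ℝ 3 g) (hgconv : ConvexOn ℝ univ g)
    (hg' : ∀ t, 0 ≤ deriv g t)
    (H₁ : ℝ → ℝ)
    (hH₁ : H₁ = fun t =>
      deriv g (Real.sqrt ((a + r * Real.cos (t / r)) ^ 2 + (b + r * Real.sin (t / r)) ^ 2))
        * (((a + r * Real.cos (t / r)) * Real.cos (t / r)
            + (b + r * Real.sin (t / r)) * Real.sin (t / r))
          / Real.sqrt ((a + r * Real.cos (t / r)) ^ 2 + (b + r * Real.sin (t / r)) ^ 2)))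
    (x : ℝ) (hx : x ∈ Icc 0 (π * r / 2))
    (hα : (a + r * Real.cos (x / r), b + r * Real.sin (x / r)) ≠ ((0 : ℝ), (0 : ℝ)))
    (hab : b * Real.cos (x / r) < a * Real.sin (x / r))
    (hgx : 0 < deriv g
      (Real.sqrt ((a + r * Real.cos (x / r)) ^ 2 + (b + r * Real.sin (x / r)) ^ 2))) :
    deriv H₁ x < 0 :=
  H1_deriv_neg_general a b r hr hb g hg hgconv H₁ hH₁ x hx hab hgx
end

section
/- Let α(x) = (a + r cos(x/r), r sin(x/r)) with r > 0, a > 0, let g : ℝ → ℝ be C³, convex, even, with g' ≥ 0, and define H₁(x) = g'(|α(x)|)·(N(x)·n(x)) with N(x) = α(x)/|α(x)| and n(x) = (cos(x/r), sin(x/r)). If g'(a + r) > 0, then H₁''(0) < 0. -/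
open Set Real Filter Topology

/-!
`H₁(x)` depends on `x` only through `s = cos (x / r)`: by the law of cosines `|α| = √(a² + r² + 2ars)`
and `⟪α, n⟫ = as + r`, so `H₁ = F ∘ cos (· / r)` for an explicit `F` that is `C²` near `s = 1`.
Since `s` has a critical point at `x = 0` with `s''(0) = -1/r²`, the second-order chain rule gives
`H₁''(0) = -F'(1) / r²`, and `F'(1) = g''(a + r) · ar/(a + r) + g'(a + r) · a²/(a + r)²` is positive
because `g'' ≥ 0` by convexity and `g'(a + r) > 0`.
-/

theorem deriv_deriv_comp {F c : ℝ → ℝ} {x : ℝ} (hF : ContDiffAt ℝ 2 F (c x))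
    (hc : ContDiffAt ℝ 2 c x) :
    deriv (deriv (F ∘ c)) x =
      deriv (deriv F) (c x) * deriv c x ^ 2 + deriv F (c x) * deriv (deriv c) x := by
  have hF_near : ∀ᶠ t in 𝓝 x, DifferentiableAt ℝ F (c t) :=
    hc.continuousAt.eventually ((hF.eventually (by simp)).mono fun _ h ↦ h.differentiableAt (by simp))
  have hc_near : ∀ᶠ t in 𝓝 x, DifferentiableAt ℝ c t :=
    (hc.eventually (by simp)).mono fun _ h ↦ h.differentiableAt (by simp)
  have hchain : deriv (F ∘ c) =ᶠ[𝓝 x] fun t ↦ deriv F (c t) * deriv c t :=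
    (hF_near.and hc_near).mono fun t h ↦ deriv_comp t h.1 h.2
  have hF' : HasDerivAt (fun t ↦ deriv F (c t)) (deriv (deriv F) (c x) * deriv c x) x :=
    ((hF.derivWithin (m := 1) le_rfl).differentiableAt one_ne_zero).hasDerivAt.comp x
      (hc.differentiableAt two_ne_zero).hasDerivAt
  have hc' : HasDerivAt (deriv c) (deriv (deriv c) x) x :=
    ((hc.derivWithin (m := 1) le_rfl).differentiableAt one_ne_zero).hasDerivAt
  rw [hchain.deriv_eq]
  exact (hF'.mul hc').deriv.trans (by ring)

theorem deriv_cos_div (r : ℝ) : deriv (fun t ↦ cos (t / r)) = fun t ↦ -sin (t / r) / r :=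
  funext fun t ↦ by simp [div_eq_mul_inv]

theorem deriv_deriv_cos_div_zero (r : ℝ) : deriv (deriv fun t ↦ cos (t / r)) 0 = -(r ^ 2)⁻¹ := by
  have hsin : HasDerivAt (fun t ↦ -sin (t / r) / r) (-cos (0 / r) / r / r) 0 := by
    simpa [div_eq_mul_inv] using ((hasDerivAt_id (0:ℝ)).div_const r).sin.neg.div_const r
  rw [deriv_cos_div, hsin.deriv]
  simp [sq, div_eq_mul_inv, mul_comm]

noncomputable def circleNorm (a r s : ℝ) : ℝ := √(a ^ 2 + r ^ 2 + 2 * a * r * s)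

theorem circleNorm_one {a r : ℝ} (h : 0 ≤ a + r) : circleNorm a r 1 = a + r := by
  rw [circleNorm, show a ^ 2 + r ^ 2 + 2 * a * r * 1 = (a + r) ^ 2 by ring, sqrt_sq h]

theorem hasDerivAt_circleNorm {a r s : ℝ} (h : 0 < a ^ 2 + r ^ 2 + 2 * a * r * s) :
    HasDerivAt (circleNorm a r) (a * r / circleNorm a r s) s := by
  unfold circleNorm
  convert (((hasDerivAt_id' s).const_mul (2 * a * r)).const_add (a ^ 2 + r ^ 2)).sqrt h.ne' using 1
  field_simp

theorem contDiffAt_circleNorm {a r s : ℝ} {n : ℕ∞} (h : 0 < a ^ 2 + r ^ 2 + 2 * a * r * s) :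
    ContDiffAt ℝ n (circleNorm a r) s := by
  unfold circleNorm
  exact (contDiffAt_const.add (contDiffAt_const.mul contDiffAt_id)).sqrt h.ne'

noncomputable def H₁OfCos (g : ℝ → ℝ) (a r s : ℝ) : ℝ :=
  deriv g (circleNorm a r s) * ((a * s + r) / circleNorm a r s)

theorem H₁OfCos_cos (g : ℝ → ℝ) (a r θ : ℝ) :
    deriv g (√((a + r * cos θ) ^ 2 + (r * sin θ) ^ 2)) *
        (((a + r * cos θ) * cos θ + (r * sin θ) * sin θ) / √((a + r * cos θ) ^ 2 + (r * sin θ) ^ 2))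
      = H₁OfCos g a r (cos θ) := by
  have hnorm : (a + r * cos θ) ^ 2 + (r * sin θ) ^ 2 = a ^ 2 + r ^ 2 + 2 * a * r * cos θ := by
    linear_combination r ^ 2 * sin_sq_add_cos_sq θ
  have hinner : (a + r * cos θ) * cos θ + (r * sin θ) * sin θ = a * cos θ + r := by
    linear_combination r * sin_sq_add_cos_sq θ
  rw [hnorm, hinner, H₁OfCos, circleNorm]

theorem contDiffAt_H₁OfCos_one {g : ℝ → ℝ} {a r : ℝ} (hab : 0 < a + r)
    (hg : ContDiffAt ℝ 2 (deriv g) (a + r)) : ContDiffAt ℝ 2 (H₁OfCos g a r) 1 := by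
  have hpos : 0 < a ^ 2 + r ^ 2 + 2 * a * r * 1 := by nlinarith
  have hnorm : ContDiffAt ℝ 2 (circleNorm a r) 1 := contDiffAt_circleNorm hpos
  rw [← circleNorm_one hab.le] at hg
  exact (hg.comp 1 hnorm).mul ((contDiffAt_const.mul contDiffAt_id).add contDiffAt_const |>.div hnorm
    (by rw [circleNorm_one hab.le]; exact hab.ne'))

theorem hasDerivAt_H₁OfCos_one {g : ℝ → ℝ} {a r : ℝ} (hab : 0 < a + r)
    (hg : DifferentiableAt ℝ (deriv g) (a + r)) :
    HasDerivAt (H₁OfCos g a r)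
      (deriv (deriv g) (a + r) * (a * r / (a + r)) + deriv g (a + r) * (a / (a + r)) ^ 2) 1 := by
  have hpos : 0 < a ^ 2 + r ^ 2 + 2 * a * r * 1 := by nlinarith
  have hnorm := hasDerivAt_circleNorm hpos
  rw [circleNorm_one hab.le] at hnorm
  rw [← circleNorm_one hab.le] at hg
  have hlin : HasDerivAt (fun s ↦ a * s + r) a 1 := by
    simpa using ((hasDerivAt_id (1:ℝ)).const_mul a).add_const r
  have hquot := hlin.div hnorm (by rw [circleNorm_one hab.le]; exact hab.ne')
  refine ((hg.hasDerivAt.comp 1 hnorm).mul hquot).congr_deriv ?_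
  simp only [Pi.div_apply, Function.comp_apply, circleNorm_one hab.le]
  field_simp
  ring

theorem H1_second_deriv_neg_at_zero_general
    (a r : ℝ) (hr : 0 < r) (ha : 0 < a)
    (g : ℝ → ℝ) (hg : ContDiff ℝ 3 g) (hgconv : ConvexOn ℝ univ g)
    (H₁ : ℝ → ℝ)
    (hH₁ : H₁ = fun t =>
      deriv g (Real.sqrt ((a + r * Real.cos (t / r)) ^ 2 + (r * Real.sin (t / r)) ^ 2))
        * (((a + r * Real.cos (t / r)) * Real.cos (t / r)
            + (r * Real.sin (t / r)) * Real.sin (t / r))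
          / Real.sqrt ((a + r * Real.cos (t / r)) ^ 2 + (r * Real.sin (t / r)) ^ 2)))
    (hgar : 0 < deriv g (a + r)) :
    deriv (deriv H₁) 0 < 0 := by
  have hab : 0 < a + r := add_pos ha hr
  have hdg : ContDiff ℝ 2 (deriv g) := hg.deriv'
  have hg'' : 0 ≤ deriv (deriv g) (a + r) :=
    (monotoneOn_univ.mp (hgconv.monotoneOn_deriv fun x _ ↦
      (hg.differentiable (by norm_num)).differentiableAt)).deriv_nonneg
  have hH : H₁ = H₁OfCos g a r ∘ fun t ↦ cos (t / r) := by
    rw [hH₁]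
    exact funext fun t ↦ H₁OfCos_cos g a r (t / r)
  have hcos : ContDiffAt ℝ 2 (fun t ↦ cos (t / r)) 0 := by fun_prop
  rw [hH, deriv_deriv_comp (by simpa using contDiffAt_H₁OfCos_one hab hdg.contDiffAt) hcos,
    deriv_deriv_cos_div_zero, deriv_cos_div]
  simp only [zero_div, cos_zero, sin_zero, neg_zero, ne_eq, OfNat.ofNat_ne_zero,
    not_false_eq_true, zero_pow, mul_zero, zero_add]
  rw [(hasDerivAt_H₁OfCos_one hab (hdg.differentiable two_ne_zero _)).deriv]
  have hF' : 0 < deriv (deriv g) (a + r) * (a * r / (a + r)) + deriv g (a + r) * (a / (a + r)) ^ 2 := by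
    positivity
  exact mul_neg_of_pos_of_neg hF' (neg_neg_of_pos (by positivity))

/-- `H₁''(0) < 0` along the circle `α(x) = (a + r cos(x/r), r sin(x/r))` centered at
    `(a, 0)` with `a > 0`, when `g'(a + r) > 0`. -/
theorem H1_second_deriv_neg_at_zero
    (a r : ℝ) (hr : 0 < r) (ha : 0 < a)
    (g : ℝ → ℝ) (hg : ContDiff ℝ 3 g) (hgconv : ConvexOn ℝ univ g)
    (hgeven : ∀ t, g (-t) = g t)
    (hg' : ∀ t, 0 ≤ t → 0 ≤ deriv g t)
    (H₁ : ℝ → ℝ)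
    (hH₁ : H₁ = fun t =>
      deriv g (Real.sqrt ((a + r * Real.cos (t / r)) ^ 2 + (r * Real.sin (t / r)) ^ 2))
        * (((a + r * Real.cos (t / r)) * Real.cos (t / r)
            + (r * Real.sin (t / r)) * Real.sin (t / r))
          / Real.sqrt ((a + r * Real.cos (t / r)) ^ 2 + (r * Real.sin (t / r)) ^ 2)))
    (hgar : 0 < deriv g (a + r)) :
    deriv (deriv H₁) 0 < 0 :=
  H1_second_deriv_neg_at_zero_general a r hr ha g hg hgconv H₁ hH₁ hgar
end

section
/- Let γ : (−β, β) → ℝ² be a C¹ unit-speed curve with γ₂(x) > 0 on (0, β), |γ| nonincreasing on [0, β), and suppose at some x ∈ (0, β) the tangent γ'(x) lies in the second quadrant (γ'₁(x) ≤ 0, γ'₂(x) ≥ 0) and γ'(x) ≠ (0, ±1). Let (a, 0) be the center of the canonical circle at x, i.e., the intersection of the normal line to γ at γ(x) with the e₁-axis. Then a ≥ 0. -/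
/-!
Differentiating `|γ|² = γ₁² + γ₂²`, the monotonicity of `|γ|` gives `γ(x) · γ'(x) ≤ 0`. The normal
line through `(a, 0)` makes `a γ₁'(x) = γ(x) · γ'(x)`, and a non-vertical unit tangent in the
second quadrant has `γ₁'(x) < 0`, so `a ≥ 0`.
-/

open Set Real Topology

theorem HasDerivAt.nonpos_of_antitoneOn {g : ℝ → ℝ} {g' x : ℝ} {s : Set ℝ}
    (hd : HasDerivAt g g' x) (hg : AntitoneOn g s) (hs : s ∈ 𝓝 x) : g' ≤ 0 :=
  hd.hasDerivWithinAt.nonpos_of_antitoneOn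
    (isOpen_interior.preperfect x (mem_interior_iff_mem_nhds.2 hs)) (hg.mono interior_subset)

theorem AntitoneOn.of_sqrt {f : ℝ → ℝ} {s : Set ℝ} (hf : AntitoneOn (fun t => √(f t)) s)
    (hnonneg : ∀ t ∈ s, 0 ≤ f t) : AntitoneOn f s :=
  fun _ ha _ hb hab => (sqrt_le_sqrt_iff (hnonneg _ ha)).1 (hf ha hb hab)

theorem HasDerivAt.fst_mul_add_snd_mul_nonpos_of_antitoneOn {γ : ℝ → ℝ × ℝ} {v : ℝ × ℝ} {x : ℝ}
    {s : Set ℝ} (hγ : HasDerivAt γ v x)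
    (hanti : AntitoneOn (fun t => √((γ t).1 ^ 2 + (γ t).2 ^ 2)) s) (hs : s ∈ 𝓝 x) :
    (γ x).1 * v.1 + (γ x).2 * v.2 ≤ 0 := by
  have hsq : HasDerivAt (fun t => (γ t).1 ^ 2 + (γ t).2 ^ 2)
      (2 * ((γ x).1 * v.1 + (γ x).2 * v.2)) x := by
    have h₁ : HasDerivAt (fun t => (γ t).1) v.1 x := hγ.fst
    have h₂ : HasDerivAt (fun t => (γ t).2) v.2 x := hγ.snd
    refine ((h₁.fun_pow 2).add (h₂.fun_pow 2)).congr_deriv ?_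
    ring
  have := hsq.nonpos_of_antitoneOn (hanti.of_sqrt fun _ _ => by positivity) hs
  linarith

theorem Prod.fst_neg_of_sq_add_sq_eq_one {v : ℝ × ℝ} (hv : v.1 ^ 2 + v.2 ^ 2 = 1)
    (hv₁ : v.1 ≤ 0) (hup : v ≠ (0, 1)) (hdown : v ≠ (0, -1)) : v.1 < 0 := by
  refine hv₁.lt_of_ne fun h₁ => ?_
  have h₂ : v.2 * v.2 = 1 := by rw [h₁] at hv; linarith
  rcases mul_self_eq_one_iff.1 h₂ with h₂ | h₂
  · exact hup (Prod.ext h₁ h₂)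
  · exact hdown (Prod.ext h₁ h₂)

theorem canonical_center_nonneg_general
    (β : ℝ)
    (γ : ℝ → ℝ × ℝ) (γ' : ℝ → ℝ × ℝ)
    (hγ : ∀ t ∈ Ioo (-β) β, HasDerivAt γ (γ' t) t)
    (hunit : ∀ t ∈ Ioo (-β) β, Real.sqrt ((γ' t).1 ^ 2 + (γ' t).2 ^ 2) = 1)
    (hmono : AntitoneOn (fun t => Real.sqrt ((γ t).1 ^ 2 + (γ t).2 ^ 2)) (Ico 0 β))
    (x : ℝ) (hx : x ∈ Ioo 0 β)
    (hq1 : (γ' x).1 ≤ 0)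
    (hnv1 : γ' x ≠ ((0 : ℝ), (1 : ℝ))) (hnv2 : γ' x ≠ ((0 : ℝ), (-1 : ℝ)))
    (a : ℝ)
    (hperp : (a - (γ x).1) * (γ' x).1 + (0 - (γ x).2) * (γ' x).2 = 0) :
    0 ≤ a := by
  have hxI : x ∈ Ioo (-β) β := ⟨by linarith [hx.1, hx.2], hx.2⟩
  have hdot : (γ x).1 * (γ' x).1 + (γ x).2 * (γ' x).2 ≤ 0 :=
    (hγ x hxI).fst_mul_add_snd_mul_nonpos_of_antitoneOn hmono (Ico_mem_nhds hx.1 hx.2)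
  have hv₁ : (γ' x).1 < 0 :=
    Prod.fst_neg_of_sq_add_sq_eq_one (sqrt_eq_one.1 (hunit x hxI)) hq1 hnv1 hnv2
  have hcenter : a * (γ' x).1 ≤ 0 := by linarith
  exact nonneg_of_mul_nonpos_left hcenter hv₁

/-- The center of the canonical circle at a point of the curve whose tangent lies in the
    second quadrant has nonnegative `e₁`-coordinate. -/
theorem canonical_center_nonneg
    (β : ℝ) (hβ : 0 < β)
    (γ : ℝ → ℝ × ℝ) (γ' : ℝ → ℝ × ℝ)
    (hγ : ∀ t ∈ Ioo (-β) β, HasDerivAt γ (γ' t) t)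
    (hunit : ∀ t ∈ Ioo (-β) β, Real.sqrt ((γ' t).1 ^ 2 + (γ' t).2 ^ 2) = 1)
    (hγ2 : ∀ t ∈ Ioo 0 β, 0 < (γ t).2)
    (hmono : AntitoneOn (fun t => Real.sqrt ((γ t).1 ^ 2 + (γ t).2 ^ 2)) (Ico 0 β))
    (x : ℝ) (hx : x ∈ Ioo 0 β)
    (hq1 : (γ' x).1 ≤ 0) (hq2 : 0 ≤ (γ' x).2)
    (hnv1 : γ' x ≠ ((0 : ℝ), (1 : ℝ))) (hnv2 : γ' x ≠ ((0 : ℝ), (-1 : ℝ)))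
    (a : ℝ)
    (hperp : (a - (γ x).1) * (γ' x).1 + (0 - (γ x).2) * (γ' x).2 = 0) :
    0 ≤ a :=
  canonical_center_nonneg_general β γ γ' hγ hunit hmono x hx hq1 hnv1 hnv2 a hperp
end
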